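/- arXiv:2404.00294 — 10 statements merged into one kernel-verified Lean document; each statement's English description precedes it below -/
import Mathlib

section
/- For all real numbers s > 0, t > 0 and every real number α, the series ∑_{k=0}^∞ (exp(−s) · s^k / k!)^α · (exp(−t) · t^k / k!)^{1−α} converges and equals exp(s^α · t^{1−α} − α·s − (1−α)·t). Consequently, for α ∉ {0,1}, (α−1)⁻¹ · log( ∑_{k=0}^∞ (exp(−s) s^k/k!)^α (exp(−t) t^k/k!)^{1−α} ) = (α·s + (1−α)·t − s^α·t^{1−α}) / (1−α). -/
/-! The weighted geometric mean `p ^ α * q ^ (1 - α)` of two Poisson weights with means `s` and `t`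
is `exp (-(α * s) - (1 - α) * t)` times the Poisson weight `x ^ k / k!` with `x = s ^ α * t ^ (1 - α)`,
so the series is a multiple of the exponential series of `x`. -/

open Real Nat

theorem mul_rpow_mul_mul_rpow_one_sub {a b c d : ℝ} (ha : 0 ≤ a) (hb : 0 ≤ b) (hc : 0 ≤ c)
    (hd : 0 ≤ d) (α : ℝ) :
    (a * c) ^ α * (b * d) ^ (1 - α) = a ^ α * b ^ (1 - α) * (c ^ α * d ^ (1 - α)) := by
  rw [mul_rpow ha hc, mul_rpow hb hd]
  ring

theorem rpow_mul_rpow_one_sub_self {c : ℝ} (hc : 0 ≤ c) (α : ℝ) : c ^ α * c ^ (1 - α) = c := by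
  rw [← rpow_add' hc (by simp), add_sub_cancel, rpow_one]

theorem exp_rpow_mul_exp_rpow_one_sub (x y α : ℝ) :
    exp x ^ α * exp y ^ (1 - α) = exp (α * x + (1 - α) * y) := by
  rw [← exp_mul, ← exp_mul, ← exp_add, mul_comm x, mul_comm y]

theorem pow_rpow_mul_pow_rpow_one_sub {a b : ℝ} (ha : 0 ≤ a) (hb : 0 ≤ b) (α : ℝ) (k : ℕ) :
    (a ^ k) ^ α * (b ^ k) ^ (1 - α) = (a ^ α * b ^ (1 - α)) ^ k := by
  rw [mul_pow, rpow_pow_comm ha, rpow_pow_comm hb]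

theorem poisson_rpow_mul_rpow_one_sub {s t : ℝ} (hs : 0 ≤ s) (ht : 0 ≤ t) (α : ℝ) (k : ℕ) :
    (exp (-s) * s ^ k / k !) ^ α * (exp (-t) * t ^ k / k !) ^ (1 - α) =
      exp (-(α * s) - (1 - α) * t) * ((s ^ α * t ^ (1 - α)) ^ k / k !) := by
  have hk : (0 : ℝ) ≤ (k ! : ℝ)⁻¹ := by positivity
  simp only [div_eq_mul_inv]
  rw [mul_rpow_mul_mul_rpow_one_sub (by positivity) (by positivity) hk hk,
    mul_rpow_mul_mul_rpow_one_sub (exp_pos _).le (exp_pos _).le (by positivity) (by positivity),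
    exp_rpow_mul_exp_rpow_one_sub, pow_rpow_mul_pow_rpow_one_sub hs ht,
    rpow_mul_rpow_one_sub_self hk]
  ring_nf

theorem hasSum_poisson_rpow_mul_rpow_one_sub {s t : ℝ} (hs : 0 ≤ s) (ht : 0 ≤ t) (α : ℝ) :
    HasSum (fun k : ℕ => (exp (-s) * s ^ k / k !) ^ α * (exp (-t) * t ^ k / k !) ^ (1 - α))
      (exp (s ^ α * t ^ (1 - α) - α * s - (1 - α) * t)) := by
  have h := (NormedSpace.expSeries_div_hasSum_exp (s ^ α * t ^ (1 - α))).mul_left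
    (exp (-(α * s) - (1 - α) * t))
  rw [← exp_eq_exp_ℝ, ← exp_add] at h
  rw [funext (poisson_rpow_mul_rpow_one_sub hs ht α)]
  rwa [show s ^ α * t ^ (1 - α) - α * s - (1 - α) * t =
    -(α * s) - (1 - α) * t + s ^ α * t ^ (1 - α) by ring]

/-- Rényi divergence of order `α` between two Poisson distributions with means `s, t > 0`:
the series `∑ₖ (e^{-s} sᵏ/k!)^α (e^{-t} tᵏ/k!)^{1-α}` converges to
`exp(s^α t^{1-α} - αs - (1-α)t)`, and consequently for `α ∉ {0,1}` the Rényi divergence equals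
`(αs + (1-α)t - s^α t^{1-α})/(1-α)`. -/
theorem poisson_renyi (s t α : ℝ) (hs : 0 < s) (ht : 0 < t) :
    HasSum (fun k : ℕ =>
      (Real.exp (-s) * s ^ k / (Nat.factorial k : ℝ)) ^ α *
        (Real.exp (-t) * t ^ k / (Nat.factorial k : ℝ)) ^ (1 - α))
      (Real.exp (s ^ α * t ^ (1 - α) - α * s - (1 - α) * t)) ∧
    (α ≠ 0 → α ≠ 1 →
      (α - 1)⁻¹ * Real.log (∑' k : ℕ,
        (Real.exp (-s) * s ^ k / (Nat.factorial k : ℝ)) ^ α *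
          (Real.exp (-t) * t ^ k / (Nat.factorial k : ℝ)) ^ (1 - α))
      = (α * s + (1 - α) * t - s ^ α * t ^ (1 - α)) / (1 - α)) := by
  have hsum := hasSum_poisson_rpow_mul_rpow_one_sub hs.le ht.le α
  refine ⟨hsum, fun _ hα₁ => ?_⟩
  rw [hsum.tsum_eq, log_exp]
  have h_one_sub : 1 - α ≠ 0 := sub_ne_zero.mpr hα₁.symm
  have h_sub_one : α - 1 ≠ 0 := sub_ne_zero.mpr hα₁
  field_simp
  ring
end

section
/- Let λ and μ be measures on a measurable space S. Suppose ν₁ and ν₂ are sigma-finite measures on S, and f₁, g₁, f₂, g₂ : S → ℝ are nonnegative measurable functions such that λ = ν₁.withDensity (fun x => ENNReal.ofReal (f₁ x)) = ν₂.withDensity (fun x => ENNReal.ofReal (f₂ x)) and μ = ν₁.withDensity (fun x => ENNReal.ofReal (g₁ x)) = ν₂.withDensity (fun x => ENNReal.ofReal (g₂ x)). Then for every α ∈ (0,1), ∫⁻ x, ENNReal.ofReal((α·f₁ x + (1−α)·g₁ x − (f₁ x)^α·(g₁ x)^{1−α})/(1−α)) ∂ν₁ = ∫⁻ x, ENNReal.ofReal((α·f₂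 x + (1−α)·g₂ x − (f₂ x)^α·(g₂ x)^{1−α})/(1−α)) ∂ν₂. In other words, the Tsallis divergence T_α(λ‖μ) does not depend on the choice of the densities nor the reference measure. -/
open MeasureTheory

lemma tsallis_homog {α a b c : ℝ}
    (ha : 0 ≤ a) (hb : 0 ≤ b) (hc : 0 ≤ c) :
    ENNReal.ofReal c * ENNReal.ofReal ((α * a + (1 - α) * b - a ^ α * b ^ (1 - α)) / (1 - α))
      = ENNReal.ofReal ((α * (a * c) + (1 - α) * (b * c)
          - (a * c) ^ α * (b * c) ^ (1 - α)) / (1 - α)) := by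
  have hrad : (a * c) ^ α * (b * c) ^ (1 - α) = a ^ α * b ^ (1 - α) * c := by
    rw [Real.mul_rpow ha hc, Real.mul_rpow hb hc]
    have : c ^ α * c ^ (1 - α) = c := by
      rw [← Real.rpow_add' hc (by norm_num)]
      simp
    calc a ^ α * c ^ α * (b ^ (1 - α) * c ^ (1 - α))
        = a ^ α * b ^ (1 - α) * (c ^ α * c ^ (1 - α)) := by ring
      _ = a ^ α * b ^ (1 - α) * c := by rw [this]
  rw [hrad, ← ENNReal.ofReal_mul hc]
  congr 1
  field_simp

lemma tsallis_aux {S : Type*} [MeasurableSpace S] (ν' ν : Measure S)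
    [SigmaFinite ν'] [SigmaFinite ν] (hac : ν' ≪ ν)
    (f g : S → ℝ) (hf : Measurable f) (hg : Measurable g)
    (hf0 : ∀ x, 0 ≤ f x) (hg0 : ∀ x, 0 ≤ g x) (α : ℝ) :
    ∫⁻ x, ENNReal.ofReal
        ((α * f x + (1 - α) * g x - (f x) ^ α * (g x) ^ (1 - α)) / (1 - α)) ∂ν'
    = ∫⁻ x, ENNReal.ofReal
        ((α * (ENNReal.ofReal (f x) * ν'.rnDeriv ν x).toReal
          + (1 - α) * (ENNReal.ofReal (g x) * ν'.rnDeriv ν x).toReal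
          - (ENNReal.ofReal (f x) * ν'.rnDeriv ν x).toReal ^ α
            * (ENNReal.ofReal (g x) * ν'.rnDeriv ν x).toReal ^ (1 - α)) / (1 - α)) ∂ν := by
  have hF : Measurable fun x => ENNReal.ofReal
      ((α * f x + (1 - α) * g x - (f x) ^ α * (g x) ^ (1 - α)) / (1 - α)) := by
    fun_prop
  conv_lhs => rw [← Measure.withDensity_rnDeriv_eq ν' ν hac]
  rw [lintegral_withDensity_eq_lintegral_mul ν (Measure.measurable_rnDeriv ν' ν) hF]
  refine lintegral_congr_ae ?_
  filter_upwards [Measure.rnDeriv_lt_top ν' ν] with x hx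
  simp only [Pi.mul_apply]
  set c := (ν'.rnDeriv ν x).toReal with hcdef
  have hc0 : 0 ≤ c := ENNReal.toReal_nonneg
  have hcr : ν'.rnDeriv ν x = ENNReal.ofReal c := by
    rw [hcdef, ENNReal.ofReal_toReal hx.ne]
  rw [hcr, tsallis_homog (hf0 x) (hg0 x) hc0]
  have hfc : (ENNReal.ofReal (f x) * ENNReal.ofReal c).toReal = f x * c := by
    rw [← ENNReal.ofReal_mul (hf0 x), ENNReal.toReal_ofReal (mul_nonneg (hf0 x) hc0)]
  have hgc : (ENNReal.ofReal (g x) * ENNReal.ofReal c).toReal = g x * c := by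
    rw [← ENNReal.ofReal_mul (hg0 x), ENNReal.toReal_ofReal (mul_nonneg (hg0 x) hc0)]
  rw [hfc, hgc]

lemma tsallis_density_unique {S : Type*} [MeasurableSpace S] (lam ν : Measure S)
    [SigmaFinite ν] {k₁ k₂ : S → ENNReal} (h₁ : Measurable k₁) (h₂ : Measurable k₂)
    (hl₁ : lam = ν.withDensity k₁) (hl₂ : lam = ν.withDensity k₂) : k₁ =ᵐ[ν] k₂ := by
  have e₁ := Measure.rnDeriv_withDensity ν h₁
  have e₂ := Measure.rnDeriv_withDensity ν h₂
  rw [← hl₁] at e₁; rw [← hl₂] at e₂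
  exact e₁.symm.trans e₂

lemma tsallis_density_unique' {S : Type*} [MeasurableSpace S]
    (lam ν₁ ν₂ : Measure S) [SigmaFinite ν₁] [SigmaFinite ν₂]
    (f₁ f₂ : S → ℝ) (hf₁ : Measurable f₁) (hf₂ : Measurable f₂)
    (hlam₁ : lam = ν₁.withDensity (fun x => ENNReal.ofReal (f₁ x)))
    (hlam₂ : lam = ν₂.withDensity (fun x => ENNReal.ofReal (f₂ x))) :
    (fun x => ENNReal.ofReal (f₁ x) * ν₁.rnDeriv (ν₁ + ν₂) x)
      =ᵐ[ν₁ + ν₂] (fun x => ENNReal.ofReal (f₂ x) * ν₂.rnDeriv (ν₁ + ν₂) x) := by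
  set ν := ν₁ + ν₂
  have hac₁ : ν₁ ≪ ν := Measure.absolutelyContinuous_of_le (Measure.le_add_right le_rfl)
  have hac₂ : ν₂ ≪ ν := Measure.absolutelyContinuous_of_le (Measure.le_add_left le_rfl)
  refine tsallis_density_unique lam ν ?_ ?_ ?_ ?_
  · exact (hf₁.ennreal_ofReal).mul (Measure.measurable_rnDeriv _ _)
  · exact (hf₂.ennreal_ofReal).mul (Measure.measurable_rnDeriv _ _)
  · rw [hlam₁]
    conv_lhs => rw [← Measure.withDensity_rnDeriv_eq ν₁ ν hac₁]
    rw [← withDensity_mul ν (Measure.measurable_rnDeriv _ _) hf₁.ennreal_ofReal]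
    congr 1; funext x; exact mul_comm _ _
  · rw [hlam₂]
    conv_lhs => rw [← Measure.withDensity_rnDeriv_eq ν₂ ν hac₂]
    rw [← withDensity_mul ν (Measure.measurable_rnDeriv _ _) hf₂.ennreal_ofReal]
    congr 1; funext x; exact mul_comm _ _

/-- The Tsallis divergence `T_α(λ‖μ)` of order `α ∈ (0,1)` does not depend on the choice
of the densities nor the sigma-finite reference measure. -/
theorem tsallis_well_defined {S : Type*} [MeasurableSpace S]
    (lam mu ν₁ ν₂ : Measure S) [SigmaFinite ν₁] [SigmaFinite ν₂]
    (f₁ g₁ f₂ g₂ : S → ℝ)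
    (hf₁ : Measurable f₁) (hg₁ : Measurable g₁)
    (hf₂ : Measurable f₂) (hg₂ : Measurable g₂)
    (hf₁0 : ∀ x, 0 ≤ f₁ x) (hg₁0 : ∀ x, 0 ≤ g₁ x)
    (hf₂0 : ∀ x, 0 ≤ f₂ x) (hg₂0 : ∀ x, 0 ≤ g₂ x)
    (hlam₁ : lam = ν₁.withDensity (fun x => ENNReal.ofReal (f₁ x)))
    (hlam₂ : lam = ν₂.withDensity (fun x => ENNReal.ofReal (f₂ x)))
    (hmu₁ : mu = ν₁.withDensity (fun x => ENNReal.ofReal (g₁ x)))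
    (hmu₂ : mu = ν₂.withDensity (fun x => ENNReal.ofReal (g₂ x)))
    (α : ℝ) (hα : α ∈ Set.Ioo (0 : ℝ) 1) :
    ∫⁻ x, ENNReal.ofReal
        ((α * f₁ x + (1 - α) * g₁ x - (f₁ x) ^ α * (g₁ x) ^ (1 - α)) / (1 - α)) ∂ν₁
    = ∫⁻ x, ENNReal.ofReal
        ((α * f₂ x + (1 - α) * g₂ x - (f₂ x) ^ α * (g₂ x) ^ (1 - α)) / (1 - α)) ∂ν₂ := by
  set ν := ν₁ + ν₂ with hν
  have hac₁ : ν₁ ≪ ν := Measure.absolutelyContinuous_of_le (Measure.le_add_right le_rfl)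
  have hac₂ : ν₂ ≪ ν := Measure.absolutelyContinuous_of_le (Measure.le_add_left le_rfl)
  rw [tsallis_aux ν₁ ν hac₁ f₁ g₁ hf₁ hg₁ hf₁0 hg₁0 α,
    tsallis_aux ν₂ ν hac₂ f₂ g₂ hf₂ hg₂ hf₂0 hg₂0 α]
  refine lintegral_congr_ae ?_
  have hk := tsallis_density_unique' lam ν₁ ν₂ f₁ f₂ hf₁ hf₂ hlam₁ hlam₂
  have hl := tsallis_density_unique' mu ν₁ ν₂ g₁ g₂ hg₁ hg₂ hmu₁ hmu₂
  filter_upwards [hk, hl] with x hkx hlx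
  rw [hkx, hlx]
end

section
/- Let ν be a measure on a measurable space S and let f, g : S → ℝ be nonnegative measurable functions. Then for all real numbers α, β with 0 < α ≤ β < 1, ∫⁻ x, ENNReal.ofReal((α·f x + (1−α)·g x − (f x)^α·(g x)^{1−α})/(1−α)) ∂ν ≤ ∫⁻ x, ENNReal.ofReal((β·f x + (1−β)·g x − (f x)^β·(g x)^{1−β})/(1−β)) ∂ν. In other words, the Tsallis divergence T_α(λ‖μ) is nondecreasing in the order α on (0,1). -/
open MeasureTheory

lemma tsallis_pointwise_mono (a b : ℝ) (ha : 0 ≤ a) (hb : 0 ≤ b)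
    (α β : ℝ) (hα : 0 < α) (hαβ : α ≤ β) (hβ : β < 1) :
    (α * a + (1 - α) * b - a ^ α * b ^ (1 - α)) / (1 - α)
      ≤ (β * a + (1 - β) * b - a ^ β * b ^ (1 - β)) / (1 - β) := by
  have h1α : (0:ℝ) < 1 - α := by linarith
  have h1β : (0:ℝ) < 1 - β := by linarith
  set θ : ℝ := (1 - β) / (1 - α) with hθdef
  have hθ0 : 0 ≤ θ := div_nonneg h1β.le h1α.le
  have hθα : θ * (1 - α) = 1 - β := div_mul_cancel₀ _ h1α.ne'
  have hθ1 : θ ≤ 1 := by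
    rw [div_le_one h1α]; linarith
  -- weighted AM-GM
  have hgm : (a ^ α * b ^ (1 - α)) ^ θ * a ^ (1 - θ) ≤
      θ * (a ^ α * b ^ (1 - α)) + (1 - θ) * a :=
    Real.geom_mean_le_arith_mean2_weighted hθ0 (by linarith)
      (mul_nonneg (Real.rpow_nonneg ha α) (Real.rpow_nonneg hb _)) ha (by ring)
  have hβpos : 0 < β := lt_of_lt_of_le hα hαβ
  have hexp : α * θ + (1 - θ) = β := by linear_combination -hθα
  have hrw : (a ^ α * b ^ (1 - α)) ^ θ * a ^ (1 - θ) = a ^ β * b ^ (1 - β) := by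
    have h1 : (1 - α) * θ = 1 - β := by rw [mul_comm]; exact hθα
    rw [Real.mul_rpow (Real.rpow_nonneg ha α) (Real.rpow_nonneg hb _),
      ← Real.rpow_mul ha, ← Real.rpow_mul hb, h1, mul_right_comm,
      ← Real.rpow_add' ha (by rw [hexp]; exact hβpos.ne'), hexp]
  rw [hrw] at hgm
  -- multiply gm by (1-α)
  have hgm' : (a ^ β * b ^ (1 - β)) * (1 - α) ≤ (1 - β) * (a ^ α * b ^ (1 - α)) + (β - α) * a := by
    have hmul := mul_le_mul_of_nonneg_right hgm h1α.le
    have h2 : (1 - θ) * (1 - α) = β - α := by linear_combination -hθα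
    have h3 : (θ * (a ^ α * b ^ (1 - α)) + (1 - θ) * a) * (1 - α)
        = (1 - β) * (a ^ α * b ^ (1 - α)) + (β - α) * a := by
      linear_combination (a ^ α * b ^ (1 - α)) * hθα + a * h2
    linarith
  rw [div_le_div_iff₀ h1α h1β]
  nlinarith [hgm']

/-- The Tsallis divergence `T_α(λ‖μ)` is nondecreasing in the order `α` on `(0,1)`. -/
theorem tsallis_mono {S : Type*} [MeasurableSpace S] (ν : Measure S)
    (f g : S → ℝ) (hf : Measurable f) (hg : Measurable g)
    (hf0 : ∀ x, 0 ≤ f x) (hg0 : ∀ x, 0 ≤ g x)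
    (α β : ℝ) (hα : 0 < α) (hαβ : α ≤ β) (hβ : β < 1) :
    ∫⁻ x, ENNReal.ofReal
        ((α * f x + (1 - α) * g x - (f x) ^ α * (g x) ^ (1 - α)) / (1 - α)) ∂ν
    ≤ ∫⁻ x, ENNReal.ofReal
        ((β * f x + (1 - β) * g x - (f x) ^ β * (g x) ^ (1 - β)) / (1 - β)) ∂ν := by
  refine lintegral_mono fun x => ENNReal.ofReal_le_ofReal ?_
  exact tsallis_pointwise_mono (f x) (g x) (hf0 x) (hg0 x) α β hα hαβ hβ
end

section
/- Let ν and μ be sigma-finite measures on a measurable space S, let f, g : S → ℝ be nonnegative measurable functions with λ = ν.withDensity (fun x => ENNReal.ofReal (f x)) and μ = ν.withDensity (fun x => ENNReal.ofReal (g x)), and let φ : S → ℝ be a nonnegative measurable function with λ = μ.withDensity (fun x => ENNReal.ofReal (φ x)). Then for every α ∈ (0,1), ∫⁻ x, ENNReal.ofReal((α·f x + (1−α)·g x − (f x)^α·(g x)^{1−α})/(1−α)) ∂ν = ∫⁻ x, ENNReal.ofReal((α·φ x + (1−α) − (φ x)^α)/(1−α)) ∂μ. That is, when λ is absolutely continuous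 with respect to μ with density φ, the Tsallis divergence T_α(λ‖μ) can be computed with the single density φ. -/
open MeasureTheory

/-- When `λ ≪ μ` with density `φ`, the Tsallis divergence `T_α(λ‖μ)` of order `α ∈ (0,1)`
can be computed with the single density `φ`. -/
theorem tsallis_absolutely_continuous {S : Type*} [MeasurableSpace S]
    (ν mu : Measure S) [SigmaFinite ν] [SigmaFinite mu]
    (f g φ : S → ℝ) (hf : Measurable f) (hg : Measurable g) (hφ : Measurable φ)
    (hf0 : ∀ x, 0 ≤ f x) (hg0 : ∀ x, 0 ≤ g x) (hφ0 : ∀ x, 0 ≤ φ x)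
    (lam : Measure S)
    (hlam : lam = ν.withDensity (fun x => ENNReal.ofReal (f x)))
    (hmu : mu = ν.withDensity (fun x => ENNReal.ofReal (g x)))
    (hlammu : lam = mu.withDensity (fun x => ENNReal.ofReal (φ x)))
    (α : ℝ) (hα : α ∈ Set.Ioo (0 : ℝ) 1) :
    ∫⁻ x, ENNReal.ofReal
        ((α * f x + (1 - α) * g x - (f x) ^ α * (g x) ^ (1 - α)) / (1 - α)) ∂ν
    = ∫⁻ x, ENNReal.ofReal ((α * φ x + (1 - α) - (φ x) ^ α) / (1 - α)) ∂mu := by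
  obtain ⟨hα0, hα1⟩ := hα
  -- f = φ * g a.e. ν
  have hcomp : ν.withDensity (fun x => ENNReal.ofReal (f x))
      = ν.withDensity (fun x => ENNReal.ofReal (g x) * ENNReal.ofReal (φ x)) := by
    rw [← hlam, hlammu, hmu,
      show (fun x => ENNReal.ofReal (g x) * ENNReal.ofReal (φ x))
        = (fun x => ENNReal.ofReal (g x)) * fun x => ENNReal.ofReal (φ x) from rfl,
      ← withDensity_mul _ hg.ennreal_ofReal hφ.ennreal_ofReal]
  have hae : (fun x => ENNReal.ofReal (f x))
      =ᵐ[ν] fun x => ENNReal.ofReal (g x) * ENNReal.ofReal (φ x) :=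
    (withDensity_eq_iff_of_sigmaFinite hf.ennreal_ofReal.aemeasurable
      (hg.ennreal_ofReal.mul hφ.ennreal_ofReal).aemeasurable).mp hcomp
  have haeR : ∀ᵐ x ∂ν, f x = φ x * g x := by
    filter_upwards [hae] with x hx
    have : ENNReal.ofReal (f x) = ENNReal.ofReal (φ x * g x) := by
      rw [hx, ← ENNReal.ofReal_mul (hg0 x)]; ring_nf
    have := congrArg ENNReal.toReal this
    rwa [ENNReal.toReal_ofReal (hf0 x), ENNReal.toReal_ofReal
      (mul_nonneg (hφ0 x) (hg0 x))] at this
  rw [hmu, lintegral_withDensity_eq_lintegral_mul _ hg.ennreal_ofReal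
    (by fun_prop)]
  refine lintegral_congr_ae ?_
  filter_upwards [haeR] with x hx
  rw [hx]
  have hrw : α * (φ x * g x) + (1 - α) * g x - (φ x * g x) ^ α * g x ^ (1 - α)
      = g x * (α * φ x + (1 - α) - φ x ^ α) := by
    rw [Real.mul_rpow (hφ0 x) (hg0 x), mul_assoc, ← Real.rpow_add' (hg0 x) (by norm_num)]
    rw [show α + (1-α) = 1 by ring, Real.rpow_one]
    ring
  rw [hrw, mul_div_assoc, ENNReal.ofReal_mul (hg0 x)]
  rfl
end

section
/- Let ν be a measure on a measurable space S and let f, g : S → ℝ be nonnegative measurable functions. Then for all real numbers α, β with 0 < α ≤ β < 1, ENNReal.ofReal((α/β)·((1−β)/(1−α))) · ∫⁻ x, ENNReal.ofReal((β·f x + (1−β)·g x − (f x)^β·(g x)^{1−β})/(1−β)) ∂ν ≤ ∫⁻ x, ENNReal.ofReal((α·f x + (1−α)·g x − (f x)^α·(g x)^{1−α})/(1−α)) ∂ν ≤ ∫⁻ x, ENNReal.ofReal((β·f x + (1−β)·g x − (f x)^β·(g x)^{1−β})/(1−β)) ∂ν. That is, (α/β)·((1−β)/(1−α))·T_β(λ‖μ)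 ≤ T_α(λ‖μ) ≤ T_β(λ‖μ). -/
/-!
For `a, b ≥ 0` the map `t ↦ a ^ t * b ^ (1 - t)` is convex on `[0, 1]` (weighted AM–GM), so the
gap `φ(t) = t a + (1 - t) b - a ^ t b ^ (1 - t)` is concave there and vanishes at `t = 0` and
`t = 1`. Slopes of secants of a concave function through a fixed point decrease, so `φ(t) / t`
decreases and `φ(t) / (1 - t)` increases on `(0, 1)`. The second fact is the upper bound, and
`φ(β) / β ≤ φ(α) / α` rearranges to the lower bound; both are integrated pointwise.
-/

open MeasureTheory Set

section Secant

variable {𝕜 : Type*} [Field 𝕜] [LinearOrder 𝕜] [IsStrictOrderedRing 𝕜] {s : Set 𝕜} {f : 𝕜 → 𝕜}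

theorem ConcaveOn.secant_anti (hf : ConcaveOn 𝕜 s f) {a x y : 𝕜} (ha : a ∈ s) (hx : x ∈ s)
    (hy : y ∈ s) (hxa : x ≠ a) (hya : y ≠ a) (hxy : x ≤ y) :
    (f y - f a) / (y - a) ≤ (f x - f a) / (x - a) := by
  have := hf.neg.secant_mono ha hx hy hxa hya hxy
  simp only [Pi.neg_apply, neg_sub_neg] at this
  rwa [← neg_sub (f x), ← neg_sub (f y), neg_div, neg_div, neg_le_neg_iff] at this

theorem ConcaveOn.antitoneOn_div (hf : ConcaveOn 𝕜 s f) (hs : 0 ∈ s) (h0 : f 0 = 0) :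
    AntitoneOn (fun t ↦ f t / t) (s \ {0}) := fun x hx y hy hxy ↦ by
  simpa only [h0, sub_zero] using hf.secant_anti hs hx.1 hy.1 hx.2 hy.2 hxy

theorem ConcaveOn.monotoneOn_div_one_sub (hf : ConcaveOn 𝕜 s f) (hs : 1 ∈ s) (h1 : f 1 = 0) :
    MonotoneOn (fun t ↦ f t / (1 - t)) (s \ {1}) := fun x hx y hy hxy ↦ by
  have := hf.secant_anti hs hx.1 hy.1 hx.2 hy.2 hxy
  simp only [h1, sub_zero, ← neg_sub (1 : 𝕜), div_neg] at this
  exact neg_le_neg_iff.mp this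

end Secant

theorem convexOn_rpow_mul_rpow_one_sub {a b : ℝ} (ha : 0 ≤ a) (hb : 0 ≤ b) :
    ConvexOn ℝ (Icc (0 : ℝ) 1) fun t ↦ a ^ t * b ^ (1 - t) := by
  refine ⟨convex_Icc 0 1, fun x ⟨hx₀, hx₁⟩ y ⟨hy₀, hy₁⟩ θ₁ θ₂ h₁ h₂ hθ ↦ ?_⟩
  have hpow : ∀ c θ : ℝ, (a ^ c * b ^ (1 - c)) ^ θ = a ^ (θ * c) * b ^ (θ * (1 - c)) :=
    fun c θ ↦ by
      rw [Real.mul_rpow (by positivity) (by positivity), mul_comm θ c, mul_comm θ (1 - c),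
        Real.rpow_mul ha, Real.rpow_mul hb]
  have amgm := Real.geom_mean_le_arith_mean2_weighted h₁ h₂ (by positivity) (by positivity) hθ
    (p₁ := a ^ x * b ^ (1 - x)) (p₂ := a ^ y * b ^ (1 - y))
  rw [hpow, hpow] at amgm
  refine (le_of_eq ?_).trans amgm
  have hexp : 1 - (θ₁ * x + θ₂ * y) = θ₁ * (1 - x) + θ₂ * (1 - y) := by linear_combination -hθ
  simp only [smul_eq_mul]
  rw [hexp, Real.rpow_add_of_nonneg ha, Real.rpow_add_of_nonneg hb]
  · ring
  all_goals apply mul_nonneg <;> linarith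

noncomputable def tsallisGap (a b t : ℝ) : ℝ := t * a + (1 - t) * b - a ^ t * b ^ (1 - t)

@[simp] theorem tsallisGap_zero (a b : ℝ) : tsallisGap a b 0 = 0 := by simp [tsallisGap]

@[simp] theorem tsallisGap_one (a b : ℝ) : tsallisGap a b 1 = 0 := by simp [tsallisGap]

theorem concaveOn_tsallisGap {a b : ℝ} (ha : 0 ≤ a) (hb : 0 ≤ b) :
    ConcaveOn ℝ (Icc (0 : ℝ) 1) (tsallisGap a b) := by
  refine ⟨convex_Icc 0 1, fun x hx y hy θ₁ θ₂ h₁ h₂ hθ ↦ ?_⟩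
  have := (convexOn_rpow_mul_rpow_one_sub ha hb).2 hx hy h₁ h₂ hθ
  simp only [tsallisGap, smul_eq_mul] at this ⊢
  linear_combination this + b * hθ

theorem tsallisGap_div_one_sub_le {a b α β : ℝ} (ha : 0 ≤ a) (hb : 0 ≤ b) (hα : 0 ≤ α)
    (hαβ : α ≤ β) (hβ : β < 1) :
    tsallisGap a b α / (1 - α) ≤ tsallisGap a b β / (1 - β) :=
  (concaveOn_tsallisGap ha hb).monotoneOn_div_one_sub (by simp) (tsallisGap_one a b)
    ⟨⟨hα, by linarith⟩, by simp; linarith⟩ ⟨⟨by linarith, hβ.le⟩, hβ.ne⟩ hαβ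

theorem tsallisGap_div_le {a b α β : ℝ} (ha : 0 ≤ a) (hb : 0 ≤ b) (hα : 0 < α)
    (hαβ : α ≤ β) (hβ : β ≤ 1) :
    tsallisGap a b β / β ≤ tsallisGap a b α / α :=
  (concaveOn_tsallisGap ha hb).antitoneOn_div (by simp) (tsallisGap_zero a b)
    ⟨⟨hα.le, by linarith⟩, hα.ne'⟩ ⟨⟨by linarith, hβ⟩, by simp; linarith⟩ hαβ

theorem mul_tsallisGap_div_one_sub_le {a b α β : ℝ} (ha : 0 ≤ a) (hb : 0 ≤ b) (hα : 0 < α)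
    (hαβ : α ≤ β) (hβ : β < 1) :
    α / β * ((1 - β) / (1 - α)) * (tsallisGap a b β / (1 - β)) ≤
      tsallisGap a b α / (1 - α) := by
  have hβ₀ : β ≠ 0 := by linarith
  have hβ₁ : 1 - β ≠ 0 := by linarith
  calc α / β * ((1 - β) / (1 - α)) * (tsallisGap a b β / (1 - β))
      = α / (1 - α) * (tsallisGap a b β / β) := by field_simp
    _ ≤ α / (1 - α) * (tsallisGap a b α / α) :=
      mul_le_mul_of_nonneg_left (tsallisGap_div_le ha hb hα hαβ hβ.le)
        (div_nonneg hα.le (by linarith))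
    _ = tsallisGap a b α / (1 - α) := by field_simp

theorem tsallis_bounds_general {S : Type*} [MeasurableSpace S] (ν : Measure S)
    (f g : S → ℝ) (hf0 : ∀ x, 0 ≤ f x) (hg0 : ∀ x, 0 ≤ g x)
    (α β : ℝ) (hα : 0 < α) (hαβ : α ≤ β) (hβ : β < 1) :
    ENNReal.ofReal ((α / β) * ((1 - β) / (1 - α))) *
      ∫⁻ x, ENNReal.ofReal
        ((β * f x + (1 - β) * g x - (f x) ^ β * (g x) ^ (1 - β)) / (1 - β)) ∂ν
    ≤ ∫⁻ x, ENNReal.ofReal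
        ((α * f x + (1 - α) * g x - (f x) ^ α * (g x) ^ (1 - α)) / (1 - α)) ∂ν
    ∧
    ∫⁻ x, ENNReal.ofReal
        ((α * f x + (1 - α) * g x - (f x) ^ α * (g x) ^ (1 - α)) / (1 - α)) ∂ν
    ≤ ∫⁻ x, ENNReal.ofReal
        ((β * f x + (1 - β) * g x - (f x) ^ β * (g x) ^ (1 - β)) / (1 - β)) ∂ν := by
  have hc : 0 ≤ α / β * ((1 - β) / (1 - α)) :=
    mul_nonneg (div_nonneg hα.le (by linarith)) (div_nonneg (by linarith) (by linarith))
  refine ⟨?_, lintegral_mono fun x ↦ ENNReal.ofReal_le_ofReal <|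
    tsallisGap_div_one_sub_le (hf0 x) (hg0 x) hα.le hαβ hβ⟩
  rw [← lintegral_const_mul' _ _ ENNReal.ofReal_ne_top]
  refine lintegral_mono fun x ↦ ?_
  rw [← ENNReal.ofReal_mul hc]
  exact ENNReal.ofReal_le_ofReal (mul_tsallisGap_div_one_sub_le (hf0 x) (hg0 x) hα hαβ hβ)

/-- Bounds among Tsallis divergences: for `0 < α ≤ β < 1`,
`(α/β)·((1-β)/(1-α))·T_β(λ‖μ) ≤ T_α(λ‖μ) ≤ T_β(λ‖μ)`. -/
theorem tsallis_bounds {S : Type*} [MeasurableSpace S] (ν : Measure S)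
    (f g : S → ℝ) (hf : Measurable f) (hg : Measurable g)
    (hf0 : ∀ x, 0 ≤ f x) (hg0 : ∀ x, 0 ≤ g x)
    (α β : ℝ) (hα : 0 < α) (hαβ : α ≤ β) (hβ : β < 1) :
    ENNReal.ofReal ((α / β) * ((1 - β) / (1 - α))) *
      ∫⁻ x, ENNReal.ofReal
        ((β * f x + (1 - β) * g x - (f x) ^ β * (g x) ^ (1 - β)) / (1 - β)) ∂ν
    ≤ ∫⁻ x, ENNReal.ofReal
        ((α * f x + (1 - α) * g x - (f x) ^ α * (g x) ^ (1 - α)) / (1 - α)) ∂ν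
    ∧
    ∫⁻ x, ENNReal.ofReal
        ((α * f x + (1 - α) * g x - (f x) ^ α * (g x) ^ (1 - α)) / (1 - α)) ∂ν
    ≤ ∫⁻ x, ENNReal.ofReal
        ((β * f x + (1 - β) * g x - (f x) ^ β * (g x) ^ (1 - β)) / (1 - β)) ∂ν :=
  tsallis_bounds_general ν f g hf0 hg0 α β hα hαβ hβ
end

section
/- Let ν be a measure on a measurable space S, let f, g : S → ℝ≥0∞ be measurable, and set λ = ν.withDensity f and μ = ν.withDensity g. Then the following are equivalent: (a) λ and μ are mutually singular (λ ⟂ μ); (b) ν {x | f x > 0 ∧ g x > 0} = 0; (c) λ {x | g x > 0} = 0. -/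
open MeasureTheory

/-- Mutual singularity `λ ⟂ μ` is equivalent to `ν{f > 0, g > 0} = 0` and to
`λ{g > 0} = 0`, for measures with densities `f = dλ/dν` and `g = dμ/dν`. -/
theorem mutuallySingular_iff {S : Type*} [MeasurableSpace S]
    (ν : Measure S) (f g : S → ENNReal) (hf : Measurable f) (hg : Measurable g)
    (lam mu : Measure S) (hlam : lam = ν.withDensity f) (hmu : mu = ν.withDensity g) :
    (lam ⟂ₘ mu ↔ ν {x | 0 < f x ∧ 0 < g x} = 0) ∧
    (lam ⟂ₘ mu ↔ lam {x | 0 < g x} = 0) := by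
  subst hlam hmu
  have hset : {x | f x ≠ 0} ∩ {x | 0 < g x} = {x | 0 < f x ∧ 0 < g x} := by
    ext x; simp [pos_iff_ne_zero]
  have hbc : ν.withDensity f {x | 0 < g x} = 0 ↔ ν {x | 0 < f x ∧ 0 < g x} = 0 := by
    rw [withDensity_apply_eq_zero hf, hset]
  have hc : ν.withDensity f ⟂ₘ ν.withDensity g ↔ ν.withDensity f {x | 0 < g x} = 0 := by
    constructor
    · rintro ⟨B, hB, h1, h2⟩
      rw [withDensity_apply_eq_zero hf] at h1
      rw [withDensity_apply_eq_zero hg] at h2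
      rw [withDensity_apply_eq_zero hf]
      have : {x | f x ≠ 0} ∩ {x | 0 < g x} ⊆
          ({x | f x ≠ 0} ∩ B) ∪ ({x | g x ≠ 0} ∩ Bᶜ) := by
        rintro x ⟨hfx, hgx⟩
        by_cases hx : x ∈ B
        · exact Or.inl ⟨hfx, hx⟩
        · exact Or.inr ⟨hgx.ne', hx⟩
      exact measure_mono_null this (measure_union_null h1 h2)
    · intro h
      refine ⟨{x | 0 < g x}, ?_, h, ?_⟩
      · have : {x | 0 < g x} = {x | g x = 0}ᶜ := by
          ext x; simp [pos_iff_ne_zero]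
        rw [this]
        exact (hg (measurableSet_singleton 0)).compl
      · rw [withDensity_apply_eq_zero hg]
        have : {x | g x ≠ 0} ∩ {x | 0 < g x}ᶜ = ∅ := by
          ext x; simp [pos_iff_ne_zero]
        simp [this]
  exact ⟨hc.trans hbc, hc⟩
end

section
/- Let ν be a measure on a measurable space S, let f, g : S → ℝ≥0∞ be measurable, and let λ = ν.withDensity f and μ = ν.withDensity g be finite measures. Then the following are equivalent: (a) λ and μ are mutually singular (λ ⟂ μ); (b) μ {x | f x = 0} = μ(Set.univ); (c) λ {x | g x = 0} = λ(Set.univ). (Statements (b) and (c) say that the order-0 Tsallis divergences satisfy T₀(λ‖μ) = μ(S) and T₀(μ‖λ) = λ(S).) -/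
open MeasureTheory

/- Each condition says that the density of one measure vanishes almost everywhere for the
other: since `μ ≪ ν`, a set carrying `ν.withDensity f` can only differ from `{f ≠ 0}` by a
`μ`-null set, and for a finite measure "almost everywhere" means "on a set of full measure". -/

theorem MeasureTheory.Measure.withDensity_mutuallySingular_iff_ae_eq_zero {S : Type*}
    [MeasurableSpace S]
    {ν μ : Measure S} {f : S → ENNReal} (hf : Measurable f) (hμν : μ ≪ ν) :
    ν.withDensity f ⟂ₘ μ ↔ ∀ᵐ x ∂μ, f x = 0 := by
  constructor
  · rintro ⟨s, -, hfs, hμs⟩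
    have hsupp : μ ({x | f x ≠ 0} ∩ s) = 0 := hμν ((withDensity_apply_eq_zero hf).mp hfs)
    refine ae_iff.mpr (measure_mono_null (fun x hx ↦ ?_) (measure_union_null hsupp hμs))
    by_cases hxs : x ∈ s
    · exact Or.inl ⟨hx, hxs⟩
    · exact Or.inr hxs
  · intro hzero
    refine ⟨{x | f x = 0}, hf (measurableSet_singleton 0), ?_, ae_iff.mp hzero⟩
    rw [withDensity_apply_eq_zero hf]
    exact measure_mono_null (fun x hx ↦ absurd hx.2 hx.1) measure_empty

/-- For finite measures `λ, μ` with densities `f = dλ/dν`, `g = dμ/dν`, the following are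
equivalent: (a) `λ ⟂ μ`; (b) `T₀(λ‖μ) = μ{f = 0} = μ(S)`; (c) `T₀(μ‖λ) = λ{g = 0} = λ(S)`. -/
theorem mutuallySingular_iff_tsallis_zero {S : Type*} [MeasurableSpace S]
    (ν : Measure S) (f g : S → ENNReal) (hf : Measurable f) (hg : Measurable g)
    (lam mu : Measure S) (hlam : lam = ν.withDensity f) (hmu : mu = ν.withDensity g)
    [IsFiniteMeasure lam] [IsFiniteMeasure mu] :
    (lam ⟂ₘ mu ↔ mu {x | f x = 0} = mu Set.univ) ∧
    (lam ⟂ₘ mu ↔ lam {x | g x = 0} = lam Set.univ) := by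
  subst hlam hmu
  rw [← ae_iff_measure_eq (p := (f · = 0)) (hf (measurableSet_singleton 0)).nullMeasurableSet,
    ← ae_iff_measure_eq (p := (g · = 0)) (hg (measurableSet_singleton 0)).nullMeasurableSet]
  exact ⟨Measure.withDensity_mutuallySingular_iff_ae_eq_zero hf
      (withDensity_absolutelyContinuous ν g),
    Measure.MutuallySingular.comm.trans <|
      Measure.withDensity_mutuallySingular_iff_ae_eq_zero hg (withDensity_absolutelyContinuous ν f)⟩
end

section
/- Let λ and μ be measures on a measurable space S. Suppose ν₁ and ν₂ are sigma-finite measures on S, and f₁, g₁, f₂, g₂ : S → ℝ are nonnegative measurable functions such that λ = ν₁.withDensity (fun x => ENNReal.ofReal (f₁ x)) = ν₂.withDensity (fun x => ENNReal.ofReal (f₂ x)) and μ = ν₁.withDensity (fun x => ENNReal.ofReal (g₁ x)) = ν₂.withDensity (fun x => ENNReal.ofReal (g₂ x)). Then ∫⁻ x, ENNReal.ofReal((Real.sqrt (f₁ x) − Real.sqrt (g₁ x))^2) ∂ν₁ = ∫⁻ x, ENNReal.ofReal((Real.sqrt (f₂ x) − Real.sqrt (g₂ x))^2) ∂ν₂.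 In other words, the squared Hellinger distance H²(λ,μ) = (1/2) ∫ (√f − √g)² dν does not depend on the choice of the densities nor the reference measure. -/
/-!
Both integrals can be moved to the common reference measure `ν = ν₁ + ν₂`. Writing
`νᵢ = ν.withDensity hᵢ`, the densities of `λ` and `μ` with respect to `ν` are `hᵢ fᵢ` and
`hᵢ gᵢ`, and since `(√(h f) - √(h g))² = h (√f - √g)²`, the Hellinger integral with respect to
`νᵢ` equals the one with respect to `ν` built from these densities. Densities with respect to a
sigma-finite measure are unique almost everywhere, so the two integrals over `ν` coincide.
-/

open MeasureTheory

section

variable {S : Type*} [MeasurableSpace S]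

lemma withDensity_ofReal_withDensity_ofReal (ν : Measure S) {h f : S → ℝ}
    (hh : Measurable h) (hf : Measurable f) (hh0 : ∀ x, 0 ≤ h x) :
    (ν.withDensity fun x => ENNReal.ofReal (h x)).withDensity (fun x => ENNReal.ofReal (f x))
      = ν.withDensity fun x => ENNReal.ofReal (h x * f x) := by
  rw [← withDensity_mul _ hh.ennreal_ofReal hf.ennreal_ofReal]
  congr 1
  funext x
  exact (ENNReal.ofReal_mul (hh0 x)).symm

lemma ae_eq_of_withDensity_ofReal_eq (ν : Measure S) [SigmaFinite ν] {f g : S → ℝ}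
    (hf : AEMeasurable f ν) (hg : AEMeasurable g ν) (hf0 : ∀ᵐ x ∂ν, 0 ≤ f x)
    (hg0 : ∀ᵐ x ∂ν, 0 ≤ g x)
    (hfg : ν.withDensity (fun x => ENNReal.ofReal (f x))
      = ν.withDensity fun x => ENNReal.ofReal (g x)) :
    f =ᵐ[ν] g := by
  have hofReal := (withDensity_eq_iff_of_sigmaFinite hf.ennreal_ofReal hg.ennreal_ofReal).mp hfg
  filter_upwards [hofReal, hf0, hg0] with x hx hfx hgx
  exact (ENNReal.ofReal_eq_ofReal_iff hfx hgx).mp hx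

lemma mul_ae_eq_of_withDensity_ofReal_withDensity_ofReal_eq (ν : Measure S) [SigmaFinite ν]
    {h₁ h₂ u₁ u₂ : S → ℝ} (hh₁ : Measurable h₁) (hh₂ : Measurable h₂) (hu₁ : Measurable u₁)
    (hu₂ : Measurable u₂) (hh₁0 : ∀ x, 0 ≤ h₁ x) (hh₂0 : ∀ x, 0 ≤ h₂ x) (hu₁0 : ∀ x, 0 ≤ u₁ x)
    (hu₂0 : ∀ x, 0 ≤ u₂ x)
    (hu : (ν.withDensity fun x => ENNReal.ofReal (h₁ x)).withDensity
        (fun x => ENNReal.ofReal (u₁ x))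
      = (ν.withDensity fun x => ENNReal.ofReal (h₂ x)).withDensity
        (fun x => ENNReal.ofReal (u₂ x))) :
    (fun x => h₁ x * u₁ x) =ᵐ[ν] fun x => h₂ x * u₂ x := by
  refine ae_eq_of_withDensity_ofReal_eq ν (hh₁.mul hu₁).aemeasurable (hh₂.mul hu₂).aemeasurable
    (.of_forall fun x => mul_nonneg (hh₁0 x) (hu₁0 x))
    (.of_forall fun x => mul_nonneg (hh₂0 x) (hu₂0 x)) ?_
  rwa [← withDensity_ofReal_withDensity_ofReal ν hh₁ hu₁ hh₁0,
    ← withDensity_ofReal_withDensity_ofReal ν hh₂ hu₂ hh₂0]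

lemma exists_ofReal_density_of_absolutelyContinuous {ν₀ ν : Measure S} [SigmaFinite ν₀]
    [ν₀.HaveLebesgueDecomposition ν] (hac : ν₀ ≪ ν) :
    ∃ h : S → ℝ, Measurable h ∧ (∀ x, 0 ≤ h x) ∧
      ν.withDensity (fun x => ENNReal.ofReal (h x)) = ν₀ := by
  refine ⟨fun x => (ν₀.rnDeriv ν x).toReal, (Measure.measurable_rnDeriv _ _).ennreal_toReal,
    fun _ => ENNReal.toReal_nonneg, ?_⟩
  refine (withDensity_congr_ae ?_).trans (Measure.withDensity_rnDeriv_eq _ _ hac)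
  filter_upwards [Measure.rnDeriv_lt_top ν₀ ν] with x hx using ENNReal.ofReal_toReal hx.ne

lemma lintegral_hellinger_withDensity_ofReal (ν : Measure S) {h f g : S → ℝ}
    (hh : Measurable h) (hf : Measurable f) (hg : Measurable g) (hh0 : ∀ x, 0 ≤ h x) :
    ∫⁻ x, ENNReal.ofReal ((Real.sqrt (f x) - Real.sqrt (g x)) ^ 2)
        ∂(ν.withDensity fun x => ENNReal.ofReal (h x))
      = ∫⁻ x, ENNReal.ofReal ((Real.sqrt (h x * f x) - Real.sqrt (h x * g x)) ^ 2) ∂ν := by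
  rw [lintegral_withDensity_eq_lintegral_mul _ hh.ennreal_ofReal (by fun_prop)]
  refine lintegral_congr fun x => ?_
  rw [Pi.mul_apply, ← ENNReal.ofReal_mul (hh0 x), Real.sqrt_mul (hh0 x), Real.sqrt_mul (hh0 x),
    ← mul_sub, mul_pow, Real.sq_sqrt (hh0 x)]

end

/-- The squared Hellinger distance `H²(λ,μ) = (1/2)∫(√f − √g)² dν` does not depend on the
choice of the densities nor the sigma-finite reference measure. -/
theorem hellinger_well_defined {S : Type*} [MeasurableSpace S]
    (lam mu ν₁ ν₂ : Measure S) [SigmaFinite ν₁] [SigmaFinite ν₂]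
    (f₁ g₁ f₂ g₂ : S → ℝ)
    (hf₁ : Measurable f₁) (hg₁ : Measurable g₁)
    (hf₂ : Measurable f₂) (hg₂ : Measurable g₂)
    (hf₁0 : ∀ x, 0 ≤ f₁ x) (hg₁0 : ∀ x, 0 ≤ g₁ x)
    (hf₂0 : ∀ x, 0 ≤ f₂ x) (hg₂0 : ∀ x, 0 ≤ g₂ x)
    (hlam₁ : lam = ν₁.withDensity (fun x => ENNReal.ofReal (f₁ x)))
    (hlam₂ : lam = ν₂.withDensity (fun x => ENNReal.ofReal (f₂ x)))
    (hmu₁ : mu = ν₁.withDensity (fun x => ENNReal.ofReal (g₁ x)))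
    (hmu₂ : mu = ν₂.withDensity (fun x => ENNReal.ofReal (g₂ x))) :
    ∫⁻ x, ENNReal.ofReal ((Real.sqrt (f₁ x) - Real.sqrt (g₁ x)) ^ 2) ∂ν₁
    = ∫⁻ x, ENNReal.ofReal ((Real.sqrt (f₂ x) - Real.sqrt (g₂ x)) ^ 2) ∂ν₂ := by
  set ν := ν₁ + ν₂
  obtain ⟨h₁, hh₁, hh₁0, hν₁⟩ :=
    exists_ofReal_density_of_absolutelyContinuous (ν₀ := ν₁) (.add_right .rfl ν₂)
  obtain ⟨h₂, hh₂, hh₂0, hν₂⟩ :=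
    exists_ofReal_density_of_absolutelyContinuous (ν₀ := ν₂) (.add_right' .rfl ν₁)
  have hf := mul_ae_eq_of_withDensity_ofReal_withDensity_ofReal_eq ν hh₁ hh₂ hf₁ hf₂ hh₁0 hh₂0
    hf₁0 hf₂0 (by rw [hν₁, hν₂, ← hlam₁, ← hlam₂])
  have hg := mul_ae_eq_of_withDensity_ofReal_withDensity_ofReal_eq ν hh₁ hh₂ hg₁ hg₂ hh₁0 hh₂0
    hg₁0 hg₂0 (by rw [hν₁, hν₂, ← hmu₁, ← hmu₂])
  calc _ = ∫⁻ x, ENNReal.ofReal ((Real.sqrt (h₁ x * f₁ x) - Real.sqrt (h₁ x * g₁ x)) ^ 2) ∂ν := by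
        rw [← lintegral_hellinger_withDensity_ofReal ν hh₁ hf₁ hg₁ hh₁0, hν₁]
    _ = ∫⁻ x, ENNReal.ofReal ((Real.sqrt (h₂ x * f₂ x) - Real.sqrt (h₂ x * g₂ x)) ^ 2) ∂ν := by
        refine lintegral_congr_ae ?_
        filter_upwards [hf, hg] with x hfx hgx
        rw [hfx, hgx]
    _ = _ := by rw [← lintegral_hellinger_withDensity_ofReal ν hh₂ hf₂ hg₂ hh₂0, hν₂]
end

section
/- Let S₁ and S₂ be measurable spaces, let ν be a sigma-finite measure on S₁, and let f, g : S₁ → ℝ be nonnegative measurable functions. Let M : Kernel S₁ S₂ be an s-finite kernel, let k, ℓ : S₁ × S₂ → ℝ be nonnegative measurable functions, and let K, L : Kernel S₁ S₂ be Markov kernels such that for all t ∈ S₁, K t = (M t).withDensity (fun x => ENNReal.ofReal (k (t,x))) and L t = (M t).withDensity (fun x => ENNReal.ofReal (ℓ (t,x))). Then for every α ∈ (0,1), ∫⁻ p, ENNReal.ofReal((α·(f p.1 · k p) + (1−α)·(g p.1 · ℓ p) − (f p.1 · k p)^α · (g p.1 · ℓ p)^{1−α})/(1−α)) ∂(ν.compProd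 M) = ∫⁻ t, ENNReal.ofReal((α·f t + (1−α)·g t − (f t)^α·(g t)^{1−α})/(1−α)) ∂ν + ∫⁻ t, ENNReal.ofReal((f t)^α · (g t)^{1−α}) · ( ∫⁻ x, ENNReal.ofReal((α·k (t,x) + (1−α)·ℓ (t,x) − (k (t,x))^α·(ℓ (t,x))^{1−α})/(1−α)) ∂(M t) ) ∂ν. That is, T_α(λ ⊗ K ‖ μ ⊗ L) = T_α(λ‖μ) + ∫ T_α(K_t‖L_t) · f_t^α g_t^{1−α} dν(t), where λ = ν.withDensity (ENNReal.ofReal ∘ f) and μ = ν.withDensity (ENNReal.ofReal ∘ g). -/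
open MeasureTheory ProbabilityTheory
open scoped ENNReal

/-!
Since `(a p)^α (b q)^(1-α) = a^α b^(1-α) · p^α q^(1-α)`, the Tsallis integrand at `(a p, b q)`
differs from `a^α b^(1-α)` times the integrand at `(p, q)` by a function that is linear in
`(p, q)`. Integrated against `M t`, where `k (t, ·)` and `ℓ (t, ·)` have integral `1` because
`K t` and `L t` are probability measures, this linear part contributes exactly the integrand at
`(f t, g t)`; the theorem follows by integrating over `ν ⊗ M` fibrewise. Weighted AM-GM makes
every term nonnegative, so the identity survives in `ℝ≥0∞`, where only finite constants are
cancelled.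
-/

/-- `T_α(λ‖μ) = ∫ tsallisFun α f g ∂ν` for densities `f`, `g` of `λ`, `μ` w.r.t. `ν`. -/
noncomputable def tsallisFun (α p q : ℝ) : ℝ :=
  (α * p + (1 - α) * q - p ^ α * q ^ (1 - α)) / (1 - α)

section

variable {α : ℝ}

lemma tsallisFun_nonneg (hα : α ∈ Set.Ioo (0 : ℝ) 1) {p q : ℝ} (hp : 0 ≤ p) (hq : 0 ≤ q) :
    0 ≤ tsallisFun α p q :=
  div_nonneg (sub_nonneg.2 (Real.geom_mean_le_arith_mean2_weighted hα.1.le (by linarith [hα.2])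
    hp hq (by ring))) (by linarith [hα.2])

@[fun_prop]
lemma Measurable.tsallisFun {X : Type*} [MeasurableSpace X] {u v : X → ℝ}
    (hu : Measurable u) (hv : Measurable v) : Measurable fun x => tsallisFun α (u x) (v x) := by
  unfold _root_.tsallisFun
  fun_prop

lemma div_one_sub_add_eq_tsallisFun_add (hα : α ≠ 1) (a b : ℝ) :
    α * a / (1 - α) + b
      = tsallisFun α a b + a ^ α * b ^ (1 - α) * (α / (1 - α)) + a ^ α * b ^ (1 - α) := by
  have : 1 - α ≠ 0 := sub_ne_zero.2 hα.symm
  unfold tsallisFun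
  field_simp
  ring

lemma tsallisFun_mul_mul (hα : α ≠ 1) {a b p q : ℝ} (ha : 0 ≤ a) (hb : 0 ≤ b) (hp : 0 ≤ p)
    (hq : 0 ≤ q) :
    tsallisFun α (a * p) (b * q) + a ^ α * b ^ (1 - α) * (α / (1 - α)) * p + a ^ α * b ^ (1 - α) * q
      = α * a / (1 - α) * p + b * q + a ^ α * b ^ (1 - α) * tsallisFun α p q := by
  have : 1 - α ≠ 0 := sub_ne_zero.2 hα.symm
  unfold tsallisFun
  rw [Real.mul_rpow ha hp, Real.mul_rpow hb hq]
  field_simp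
  ring

end

section

variable {X : Type*} [MeasurableSpace X] (μ : Measure X) {α : ℝ} (hα : α ∈ Set.Ioo (0 : ℝ) 1)
  {k ℓ : X → ℝ} (hk : Measurable k) (hℓ : Measurable ℓ) (hk0 : ∀ x, 0 ≤ k x) (hℓ0 : ∀ x, 0 ≤ ℓ x)
  {a b : ℝ} (ha : 0 ≤ a) (hb : 0 ≤ b)
include hα hk hℓ hk0 hℓ0 ha hb

lemma lintegral_tsallisFun_mul_mul_add :
    ∫⁻ x, .ofReal (tsallisFun α (a * k x) (b * ℓ x)) ∂μ
        + .ofReal (a ^ α * b ^ (1 - α) * (α / (1 - α))) * ∫⁻ x, .ofReal (k x) ∂μ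
        + .ofReal (a ^ α * b ^ (1 - α)) * ∫⁻ x, .ofReal (ℓ x) ∂μ
      = .ofReal (α * a / (1 - α)) * ∫⁻ x, .ofReal (k x) ∂μ + .ofReal b * ∫⁻ x, .ofReal (ℓ x) ∂μ
        + .ofReal (a ^ α * b ^ (1 - α)) * ∫⁻ x, .ofReal (tsallisFun α (k x) (ℓ x)) ∂μ := by
  have hα1 : α ≠ 1 := hα.2.ne
  have hc : 0 < 1 - α := by linarith [hα.2]
  have hG : 0 ≤ a ^ α * b ^ (1 - α) := by positivity
  have pointwise : ∀ x, .ofReal (tsallisFun α (a * k x) (b * ℓ x))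
        + .ofReal (a ^ α * b ^ (1 - α) * (α / (1 - α))) * .ofReal (k x)
        + .ofReal (a ^ α * b ^ (1 - α)) * .ofReal (ℓ x)
      = .ofReal (α * a / (1 - α)) * .ofReal (k x) + .ofReal b * .ofReal (ℓ x)
        + .ofReal (a ^ α * b ^ (1 - α)) * ENNReal.ofReal (tsallisFun α (k x) (ℓ x)) := by
    intro x
    have hT := tsallisFun_nonneg hα (mul_nonneg ha (hk0 x)) (mul_nonneg hb (hℓ0 x))
    have hc1 : 0 ≤ a ^ α * b ^ (1 - α) * (α / (1 - α)) := mul_nonneg hG (div_nonneg hα.1.le hc.le)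
    have hd : 0 ≤ α * a / (1 - α) := div_nonneg (mul_nonneg hα.1.le ha) hc.le
    rw [← ENNReal.ofReal_mul hc1, ← ENNReal.ofReal_mul hG, ← ENNReal.ofReal_mul hd,
      ← ENNReal.ofReal_mul hb, ← ENNReal.ofReal_mul hG,
      ← ENNReal.ofReal_add hT (mul_nonneg hc1 (hk0 x)),
      ← ENNReal.ofReal_add (add_nonneg hT (mul_nonneg hc1 (hk0 x))) (mul_nonneg hG (hℓ0 x)),
      ← ENNReal.ofReal_add (mul_nonneg hd (hk0 x)) (mul_nonneg hb (hℓ0 x)),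
      ← ENNReal.ofReal_add (add_nonneg (mul_nonneg hd (hk0 x)) (mul_nonneg hb (hℓ0 x)))
        (mul_nonneg hG (tsallisFun_nonneg hα (hk0 x) (hℓ0 x))),
      tsallisFun_mul_mul hα1 ha hb (hk0 x) (hℓ0 x)]
  have h := lintegral_congr (μ := μ) pointwise
  rwa [lintegral_add_left (by fun_prop), lintegral_add_left (by fun_prop),
    lintegral_add_left (by fun_prop), lintegral_add_left (by fun_prop),
    lintegral_const_mul _ (by fun_prop), lintegral_const_mul _ (by fun_prop),
    lintegral_const_mul _ (by fun_prop), lintegral_const_mul _ (by fun_prop),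
    lintegral_const_mul _ (by fun_prop)] at h

lemma lintegral_tsallisFun_mul_mul (hk1 : ∫⁻ x, .ofReal (k x) ∂μ = 1)
    (hℓ1 : ∫⁻ x, .ofReal (ℓ x) ∂μ = 1) :
    ∫⁻ x, .ofReal (tsallisFun α (a * k x) (b * ℓ x)) ∂μ
      = .ofReal (tsallisFun α a b)
        + .ofReal (a ^ α * b ^ (1 - α)) * ∫⁻ x, .ofReal (tsallisFun α (k x) (ℓ x)) ∂μ := by
  have hc : 0 < 1 - α := by linarith [hα.2]
  have hG : 0 ≤ a ^ α * b ^ (1 - α) := by positivity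
  have hc1 : 0 ≤ a ^ α * b ^ (1 - α) * (α / (1 - α)) := mul_nonneg hG (div_nonneg hα.1.le hc.le)
  have hsplit : ENNReal.ofReal (α * a / (1 - α)) + .ofReal b
      = .ofReal (tsallisFun α a b) + .ofReal (a ^ α * b ^ (1 - α) * (α / (1 - α)))
        + .ofReal (a ^ α * b ^ (1 - α)) := by
    rw [← ENNReal.ofReal_add (div_nonneg (mul_nonneg hα.1.le ha) hc.le) hb,
      ← ENNReal.ofReal_add (tsallisFun_nonneg hα ha hb) hc1,
      ← ENNReal.ofReal_add (add_nonneg (tsallisFun_nonneg hα ha hb) hc1) hG,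
      div_one_sub_add_eq_tsallisFun_add hα.2.ne]
  have h := lintegral_tsallisFun_mul_mul_add μ hα hk hℓ hk0 hℓ0 ha hb
  rw [hk1, hℓ1, mul_one, mul_one, mul_one, mul_one, hsplit] at h
  refine (ENNReal.add_left_inj (a := .ofReal (a ^ α * b ^ (1 - α) * (α / (1 - α)))
    + .ofReal (a ^ α * b ^ (1 - α))) (by finiteness)).1 ?_
  convert h using 1 <;> ring

end

/-- Disintegration of Tsallis divergences: for `α ∈ (0,1)`,
`T_α(λ ⊗ K ‖ μ ⊗ L) = T_α(λ‖μ) + ∫ T_α(K_t‖L_t) · f_t^α g_t^{1-α} dν(t)`,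
where `λ = ν.withDensity f`, `μ = ν.withDensity g`, and the Markov kernels `K, L` have
densities `k, ℓ` with respect to the kernel `M`. -/
theorem tsallis_kernel_disintegration {S₁ S₂ : Type*} [MeasurableSpace S₁] [MeasurableSpace S₂]
    (ν : Measure S₁) [SigmaFinite ν]
    (f g : S₁ → ℝ) (hf : Measurable f) (hg : Measurable g)
    (hf0 : ∀ t, 0 ≤ f t) (hg0 : ∀ t, 0 ≤ g t)
    (M : Kernel S₁ S₂) [IsSFiniteKernel M]
    (k ℓ : S₁ × S₂ → ℝ) (hk : Measurable k) (hℓ : Measurable ℓ)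
    (hk0 : ∀ p, 0 ≤ k p) (hℓ0 : ∀ p, 0 ≤ ℓ p)
    (K L : Kernel S₁ S₂) [IsMarkovKernel K] [IsMarkovKernel L]
    (hK : ∀ t, K t = (M t).withDensity (fun x => ENNReal.ofReal (k (t, x))))
    (hL : ∀ t, L t = (M t).withDensity (fun x => ENNReal.ofReal (ℓ (t, x))))
    (α : ℝ) (hα : α ∈ Set.Ioo (0 : ℝ) 1) :
    ∫⁻ p, ENNReal.ofReal
        ((α * (f p.1 * k p) + (1 - α) * (g p.1 * ℓ p)
          - (f p.1 * k p) ^ α * (g p.1 * ℓ p) ^ (1 - α)) / (1 - α)) ∂(ν.compProd M)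
    = (∫⁻ t, ENNReal.ofReal
          ((α * f t + (1 - α) * g t - (f t) ^ α * (g t) ^ (1 - α)) / (1 - α)) ∂ν)
      + ∫⁻ t, ENNReal.ofReal ((f t) ^ α * (g t) ^ (1 - α)) *
          (∫⁻ x, ENNReal.ofReal
            ((α * k (t, x) + (1 - α) * ℓ (t, x)
              - (k (t, x)) ^ α * (ℓ (t, x)) ^ (1 - α)) / (1 - α)) ∂(M t)) ∂ν := by
  have hk1 (t : S₁) : ∫⁻ x, .ofReal (k (t, x)) ∂(M t) = 1 := by
    rw [← setLIntegral_univ, ← withDensity_apply _ .univ, ← hK t, measure_univ]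
  have hℓ1 (t : S₁) : ∫⁻ x, .ofReal (ℓ (t, x)) ∂(M t) = 1 := by
    rw [← setLIntegral_univ, ← withDensity_apply _ .univ, ← hL t, measure_univ]
  calc _ = ∫⁻ t, ∫⁻ x, .ofReal (tsallisFun α (f t * k (t, x)) (g t * ℓ (t, x))) ∂(M t) ∂ν :=
        Measure.lintegral_compProd (by fun_prop)
    _ = ∫⁻ t, (.ofReal (tsallisFun α (f t) (g t)) + .ofReal (f t ^ α * g t ^ (1 - α))
          * ∫⁻ x, .ofReal (tsallisFun α (k (t, x)) (ℓ (t, x))) ∂(M t)) ∂ν :=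
        lintegral_congr fun t => lintegral_tsallisFun_mul_mul (M t) hα (by fun_prop) (by fun_prop)
          (fun x => hk0 (t, x)) (fun x => hℓ0 (t, x)) (hf0 t) (hg0 t) (hk1 t) (hℓ1 t)
    _ = _ := lintegral_add_left (by fun_prop) _
end

section
/- For every real number t with |Real.log t| ≤ 1 (equivalently exp(−1) ≤ t ≤ exp 1), the following two inequalities hold: |Real.log t + 1 − t| ≤ 2 · (exp 1)^3 · (Real.sqrt t − 1)^2, and (Real.log t)^2 ≤ 4 · (exp 1)^3 · (Real.sqrt t − 1)^2. -/
/-!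
Write `t = s²` with `s = √t`. The two tangent-line bounds `1 - x⁻¹ ≤ log x ≤ x - 1` give
`t - 1 - log t ≤ (t - 1)² / t` and `(log s)² ≤ (1 + s⁻²)(s - 1)²`, and `(t - 1)² = (s - 1)²(s + 1)²`
with `(s + 1)² ≤ 2(t + 1)`. Every constant is then of the form `1 + t⁻¹`, and `|log t| ≤ 1`
gives `t⁻¹ ≤ e`, while `1 + e ≤ e³`. For `t ≤ 0` (where `√t = 0` and `log t = log |t|`) the
right-hand sides are constants and `|t| ≤ e` suffices.
-/

open Real

lemma sq_le_sq_add_sq_of_le_of_le {a b y : ℝ} (ha : a ≤ y) (hb : y ≤ b) :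
    y ^ 2 ≤ a ^ 2 + b ^ 2 := by
  rcases le_total 0 y with hy | hy <;> nlinarith

namespace Real

lemma abs_le_exp_of_log_le {x y : ℝ} (h : log x ≤ y) : |x| ≤ exp y := by
  rcases eq_or_ne x 0 with rfl | hx
  · simpa using (exp_pos y).le
  · rw [← exp_log (abs_pos.mpr hx), log_abs]
    exact exp_le_exp.mpr h

lemma one_add_exp_one_le_exp_one_pow_three : 1 + exp 1 ≤ exp 1 ^ 3 := by
  have two_le_e : 2 ≤ exp 1 := by linarith [add_one_le_exp 1]
  have four_le_e_sq : 4 ≤ exp 1 ^ 2 := by nlinarith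
  nlinarith

lemma sq_log_le_of_pos {x : ℝ} (hx : 0 < x) :
    log x ^ 2 ≤ (1 + (x ^ 2)⁻¹) * (x - 1) ^ 2 := by
  have h := sq_le_sq_add_sq_of_le_of_le (one_sub_inv_le_log_of_pos hx) (log_le_sub_one_of_pos hx)
  have h_inv : (1 - x⁻¹) ^ 2 = (x ^ 2)⁻¹ * (x - 1) ^ 2 := by field_simp
  linarith

lemma sub_one_sub_log_le_of_pos {x : ℝ} (hx : 0 < x) : x - 1 - log x ≤ (x - 1) ^ 2 / x := by
  have h := one_sub_inv_le_log_of_pos hx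
  have h_div : (x - 1) ^ 2 / x = x - 2 + x⁻¹ := by field_simp; ring
  linarith

lemma sq_sub_one_div_le {t : ℝ} (ht : 0 < t) :
    (t - 1) ^ 2 / t ≤ 2 * (1 + t⁻¹) * (√t - 1) ^ 2 := by
  set s := √t
  have hs : s ^ 2 = t := sq_sqrt ht.le
  have h_factor : (t - 1) ^ 2 = (s + 1) ^ 2 * (s - 1) ^ 2 := by rw [← hs]; ring
  have h_sum : (s + 1) ^ 2 ≤ 2 * (t + 1) := by nlinarith [sq_nonneg (s - 1)]
  calc (t - 1) ^ 2 / t = (s + 1) ^ 2 / t * (s - 1) ^ 2 := by rw [h_factor]; ring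
    _ ≤ 2 * (t + 1) / t * (s - 1) ^ 2 := by gcongr
    _ = 2 * (1 + t⁻¹) * (s - 1) ^ 2 := by field_simp

end Real

/-- For `|log t| ≤ 1`: `|log t + 1 − t| ≤ 2e³(√t − 1)²` and `(log t)² ≤ 4e³(√t − 1)²`. -/
theorem log_bounds (t : ℝ) (h : |Real.log t| ≤ 1) :
    |Real.log t + 1 - t| ≤ 2 * Real.exp 1 ^ 3 * (Real.sqrt t - 1) ^ 2 ∧
    Real.log t ^ 2 ≤ 4 * Real.exp 1 ^ 3 * (Real.sqrt t - 1) ^ 2 := by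
  have he := one_add_exp_one_le_exp_one_pow_three
  obtain ⟨hlog_lower, hlog_upper⟩ := abs_le.mp h
  rcases le_or_gt t 0 with ht | ht
  · have h_abs : |t| ≤ exp 1 := abs_le_exp_of_log_le hlog_upper
    rw [sqrt_eq_zero_of_nonpos ht]
    refine ⟨abs_le.mpr ⟨?_, ?_⟩, ?_⟩ <;> nlinarith [abs_le.mp h_abs]
  have h_inv : 1 + t⁻¹ ≤ exp 1 ^ 3 := by
    have : |t⁻¹| ≤ exp 1 := abs_le_exp_of_log_le (by rw [log_inv]; linarith)
    linarith [le_abs_self t⁻¹]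
  have h_upper : log t + 1 - t ≤ 0 := by linarith [log_le_sub_one_of_pos ht]
  have h_lower : t - 1 - log t ≤ 2 * exp 1 ^ 3 * (√t - 1) ^ 2 :=
    calc t - 1 - log t ≤ (t - 1) ^ 2 / t := sub_one_sub_log_le_of_pos ht
      _ ≤ 2 * (1 + t⁻¹) * (√t - 1) ^ 2 := sq_sub_one_div_le ht
      _ ≤ 2 * exp 1 ^ 3 * (√t - 1) ^ 2 := by gcongr
  have h_sq_log : log √t ^ 2 ≤ exp 1 ^ 3 * (√t - 1) ^ 2 :=
    calc log √t ^ 2 ≤ (1 + (√t ^ 2)⁻¹) * (√t - 1) ^ 2 := sq_log_le_of_pos (sqrt_pos.mpr ht)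
      _ ≤ exp 1 ^ 3 * (√t - 1) ^ 2 := by rw [sq_sqrt ht.le]; gcongr
  have h_log_eq : log t = 2 * log √t := by rw [log_sqrt ht.le]; ring
  refine ⟨abs_le.mpr ⟨by linarith, h_upper.trans (by positivity)⟩, ?_⟩
  rw [h_log_eq]
  linarith
end
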